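/- arXiv:1910.05699 — 2 statements merged into one kernel-verified Lean document; each statement's English description precedes it below -/
import Mathlib

section
/- (Weyl's inequality) For any two matrices M, N ∈ ℂ^{m×n} and any index i ∈ {1,…,min(m,n)}, the i-th largest singular values satisfy |σᵢ(M) − σᵢ(N)| ≤ ‖M − N‖, where ‖·‖ denotes the spectral norm. -/
/-!
Weyl's inequality holds for any two linear maps `A B : E →ₗ[𝕜] F` between finite-dimensional inner
product spaces. Let `n = dim E` and `k < n`. The span of the first `k + 1` eigenvectors of `A†A` and
the span of the last `n - k` eigenvectors of `B†B` have dimensions adding up to `n + 1`, so they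
share a unit vector `u`, and then `σₖ(A) ≤ ‖A u‖ ≤ ‖B u‖ + ‖A - B‖ ≤ σₖ(B) + ‖A - B‖`.
For matrices, `singVal` and `specNorm` are the singular values and the operator norm of
`Matrix.toEuclideanLin`.
-/

open Matrix

/-- The ℓ² norm of a vector. -/
noncomputable def l2norm {n : Type*} [Fintype n] (v : n → ℂ) : ℝ :=
  Real.sqrt (∑ i, ‖v i‖ ^ 2)

/-- The spectral (operator) norm of a matrix. -/
noncomputable def specNorm {m n : Type*} [Fintype m] [Fintype n] (M : Matrix m n ℂ) : ℝ :=
  sSup ((fun v : n → ℂ => l2norm (M.mulVec v)) '' {v : n → ℂ | l2norm v ≤ 1})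

/-- The `i`-th singular value of `M` in non-increasing order (0-indexed), defined as the
square root of the `i`-th largest eigenvalue of the Hermitian matrix `Mᴴ * M`. -/
noncomputable def singVal {m n : ℕ} (M : Matrix (Fin m) (Fin n) ℂ) (i : ℕ) : ℝ :=
  Real.sqrt
    ((((Finset.univ.val.map
        (Matrix.isHermitian_conjTranspose_mul_self M).eigenvalues).sort (· ≤ ·)).reverse.getD i 0))

open Module InnerProductSpace Submodule

namespace OrthonormalBasis

variable {ι 𝕜 E : Type*} [RCLike 𝕜] [NormedAddCommGroup E] [InnerProductSpace 𝕜 E] [Fintype ι]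

theorem repr_apply_eq_zero_of_mem_span (b : OrthonormalBasis ι 𝕜 E) {s : Set ι} {v : E}
    (hv : v ∈ span 𝕜 (b '' s)) {j : ι} (hj : j ∉ s) : b.repr v j = 0 := by
  have hspan : span 𝕜 (b '' s) ≤ (𝕜 ∙ b j)ᗮ := by
    refine span_le.2 ?_
    rintro _ ⟨k, hk, rfl⟩
    exact mem_orthogonal_singleton_iff_inner_right.2
      (b.orthonormal.2 (ne_of_mem_of_not_mem hk hj).symm)
  rw [b.repr_apply_apply]
  exact mem_orthogonal_singleton_iff_inner_right.1 (hspan hv)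

theorem finrank_span_image (b : OrthonormalBasis ι 𝕜 E) (s : Finset ι) :
    finrank 𝕜 (span 𝕜 (b '' s)) = s.card := by
  rw [Set.image_eq_range]
  exact (finrank_span_eq_card (b.orthonormal.linearIndependent.comp _ Subtype.val_injective)).trans
    (by simp)

end OrthonormalBasis

theorem Submodule.exists_mem_inf_ne_zero_of_finrank_lt_add {K V : Type*} [DivisionRing K]
    [AddCommGroup V] [Module K V] [FiniteDimensional K V] {s t : Submodule K V}
    (h : finrank K V < finrank K s + finrank K t) : ∃ v ∈ s ⊓ t, v ≠ 0 := by
  by_contra! hst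
  exact h.not_ge (finrank_add_finrank_le_of_disjoint (disjoint_def.2 fun v hs ht => hst v ⟨hs, ht⟩))

namespace LinearMap.IsSymmetric

variable {𝕜 E : Type*} [RCLike 𝕜] [NormedAddCommGroup E] [InnerProductSpace 𝕜 E]
  [FiniteDimensional 𝕜 E] {T : E →ₗ[𝕜] E} {n : ℕ} (hT : T.IsSymmetric) (hn : finrank 𝕜 E = n)

theorem re_inner_apply_self_sub_eq_sum (c : ℝ) (v : E) :
    RCLike.re (inner 𝕜 v (T v)) - c * ‖v‖ ^ 2 =
      ∑ j, (hT.eigenvalues hn j - c) * ‖(hT.eigenvectorBasis hn).repr v j‖ ^ 2 := by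
  have hinner : RCLike.re (inner 𝕜 v (T v)) =
      ∑ j, hT.eigenvalues hn j * ‖(hT.eigenvectorBasis hn).repr v j‖ ^ 2 := by
    rw [← (hT.eigenvectorBasis hn).repr.inner_map_map, PiLp.inner_apply, map_sum]
    refine Finset.sum_congr rfl fun j _ => ?_
    rw [hT.eigenvectorBasis_apply_self_apply, RCLike.inner_apply, mul_assoc, RCLike.mul_conj,
      ← RCLike.ofReal_pow, ← RCLike.ofReal_mul, RCLike.ofReal_re]
  have hnorm : ‖v‖ ^ 2 = ∑ j, ‖(hT.eigenvectorBasis hn).repr v j‖ ^ 2 := by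
    rw [← (hT.eigenvectorBasis hn).repr.norm_map, EuclideanSpace.norm_sq_eq]
  simp_rw [hinner, hnorm, Finset.mul_sum, ← Finset.sum_sub_distrib, sub_mul]

theorem eigenvalues_mul_norm_sq_le_of_mem_span {k : Fin n} {v : E}
    (hv : v ∈ span 𝕜 (hT.eigenvectorBasis hn '' Set.Iic k)) :
    hT.eigenvalues hn k * ‖v‖ ^ 2 ≤ RCLike.re (inner 𝕜 v (T v)) := by
  rw [← sub_nonneg, hT.re_inner_apply_self_sub_eq_sum hn]
  refine Finset.sum_nonneg fun j _ => ?_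
  by_cases hj : j ≤ k
  · exact mul_nonneg (sub_nonneg.2 (hT.eigenvalues_antitone hn hj)) (sq_nonneg _)
  · simp [(hT.eigenvectorBasis hn).repr_apply_eq_zero_of_mem_span hv hj]

theorem re_inner_le_eigenvalues_mul_norm_sq_of_mem_span {k : Fin n} {v : E}
    (hv : v ∈ span 𝕜 (hT.eigenvectorBasis hn '' Set.Ici k)) :
    RCLike.re (inner 𝕜 v (T v)) ≤ hT.eigenvalues hn k * ‖v‖ ^ 2 := by
  rw [← sub_nonpos, hT.re_inner_apply_self_sub_eq_sum hn]
  refine Finset.sum_nonpos fun j _ => ?_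
  by_cases hj : k ≤ j
  · exact mul_nonpos_of_nonpos_of_nonneg (sub_nonpos.2 (hT.eigenvalues_antitone hn hj))
      (sq_nonneg _)
  · simp [(hT.eigenvectorBasis hn).repr_apply_eq_zero_of_mem_span hv hj]

theorem exists_norm_eq_one_eigenvalues_le {S : E →ₗ[𝕜] E} (hS : S.IsSymmetric) (k : Fin n) :
    ∃ u : E, ‖u‖ = 1 ∧ hT.eigenvalues hn k ≤ RCLike.re (inner 𝕜 u (T u)) ∧
      RCLike.re (inner 𝕜 u (S u)) ≤ hS.eigenvalues hn k := by
  set V := span 𝕜 (hT.eigenvectorBasis hn '' Set.Iic k)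
  set W := span 𝕜 (hS.eigenvectorBasis hn '' Set.Ici k)
  have hdim : finrank 𝕜 E < finrank 𝕜 V + finrank 𝕜 W := by
    have hV := (hT.eigenvectorBasis hn).finrank_span_image (Finset.Iic k)
    have hW := (hS.eigenvectorBasis hn).finrank_span_image (Finset.Ici k)
    rw [Finset.coe_Iic, Fin.card_Iic] at hV
    rw [Finset.coe_Ici, Fin.card_Ici] at hW
    rw [hV, hW]
    omega
  obtain ⟨v, ⟨hvV, hvW⟩, hv⟩ := exists_mem_inf_ne_zero_of_finrank_lt_add hdim
  set u := (‖v‖⁻¹ : 𝕜) • v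
  have hu : ‖u‖ = 1 := by
    simp [u, norm_smul, inv_mul_cancel₀ (norm_ne_zero_iff.2 hv)]
  have hT_u := hT.eigenvalues_mul_norm_sq_le_of_mem_span hn (V.smul_mem (‖v‖⁻¹ : 𝕜) hvV)
  have hS_u := hS.re_inner_le_eigenvalues_mul_norm_sq_of_mem_span hn (W.smul_mem (‖v‖⁻¹ : 𝕜) hvW)
  rw [hu, one_pow, mul_one] at hT_u hS_u
  exact ⟨u, hu, hT_u, hS_u⟩

end LinearMap.IsSymmetric

namespace LinearMap

variable {𝕜 E F : Type*} [RCLike 𝕜] [NormedAddCommGroup E] [InnerProductSpace 𝕜 E]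
  [FiniteDimensional 𝕜 E] [NormedAddCommGroup F] [InnerProductSpace 𝕜 F] [FiniteDimensional 𝕜 F]

theorem re_inner_adjoint_comp_self_apply (A : E →ₗ[𝕜] F) (v : E) :
    RCLike.re (inner 𝕜 v ((adjoint A ∘ₗ A) v)) = ‖A v‖ ^ 2 := by
  rw [comp_apply, adjoint_inner_right, inner_self_eq_norm_sq]

theorem singularValues_le_add_norm_sub (A B : E →ₗ[𝕜] F) (i : ℕ) :
    A.singularValues i ≤ B.singularValues i + ‖toContinuousLinearMap (A - B)‖ := by
  rcases lt_or_ge i (finrank 𝕜 E) with hi | hi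
  · obtain ⟨u, hu, hAu, hBu⟩ := A.isSymmetric_adjoint_comp_self.exists_norm_eq_one_eigenvalues_le
      rfl B.isSymmetric_adjoint_comp_self ⟨i, hi⟩
    rw [re_inner_adjoint_comp_self_apply, ← sq_singularValues_of_lt _ rfl hi,
      pow_le_pow_iff_left₀ (singularValues_nonneg _ _) (norm_nonneg _) two_ne_zero] at hAu
    rw [re_inner_adjoint_comp_self_apply, ← sq_singularValues_of_lt _ rfl hi,
      pow_le_pow_iff_left₀ (norm_nonneg _) (singularValues_nonneg _ _) two_ne_zero] at hBu
    have hAB : ‖(A - B) u‖ ≤ ‖toContinuousLinearMap (A - B)‖ := by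
      simpa [hu] using (toContinuousLinearMap (A - B)).le_opNorm u
    calc A.singularValues i ≤ ‖A u‖ := hAu
      _ ≤ ‖B u‖ + ‖A u - B u‖ := norm_le_norm_add_norm_sub' _ _
      _ ≤ B.singularValues i + ‖toContinuousLinearMap (A - B)‖ := add_le_add hBu hAB
  · simp [singularValues_of_finrank_le _ hi]

theorem abs_sub_singularValues_le (A B : E →ₗ[𝕜] F) (i : ℕ) :
    |A.singularValues i - B.singularValues i| ≤ ‖toContinuousLinearMap (A - B)‖ := by
  have hBA := B.singularValues_le_add_norm_sub A i
  rw [← neg_sub, map_neg, norm_neg] at hBA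
  rw [abs_sub_le_iff]
  constructor <;> linarith [A.singularValues_le_add_norm_sub B i]

end LinearMap

theorem l2norm_eq_norm_toLp {n : Type*} [Fintype n] (v : n → ℂ) :
    l2norm v = ‖WithLp.toLp 2 v‖ := by
  rw [l2norm, EuclideanSpace.norm_eq]

theorem specNorm_eq_norm_toContinuousLinearMap {m n : Type*} [Fintype m] [Fintype n]
    [DecidableEq n] (A : Matrix m n ℂ) :
    specNorm A = ‖LinearMap.toContinuousLinearMap (toEuclideanLin A)‖ := by
  have hball : {v : n → ℂ | l2norm v ≤ 1} = WithLp.toLp 2 ⁻¹' Metric.closedBall 0 1 := by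
    ext v
    simp [l2norm_eq_norm_toLp]
  rw [← ContinuousLinearMap.sSup_unitClosedBall_eq_norm,
    ← Set.image_preimage_eq (Metric.closedBall _ _) (WithLp.toLp_surjective 2), Set.image_image,
    specNorm, hball]
  simp [l2norm_eq_norm_toLp]

theorem Multiset.reverse_sort_eq_ofFn {α : Type*} [LinearOrder α] {n : ℕ} {s : Multiset α}
    {f : Fin n → α} (hf : Antitone f) (hs : Finset.univ.val.map f = s) :
    (s.sort (· ≤ ·)).reverse = List.ofFn f := by
  refine List.Perm.eq_of_sortedGE ?_ hf.sortedGE_ofFn ?_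
  · exact List.sortedGE_reverse.2 (List.sortedLE_iff_pairwise.2 (Multiset.pairwise_sort _ _))
  · rw [← Multiset.coe_eq_coe, ← Fin.univ_val_map, hs, Multiset.coe_reverse, Multiset.sort_eq]

theorem Matrix.IsHermitian.map_eigenvalues_eq {ι 𝕜 E : Type*} [RCLike 𝕜] [Fintype ι] [DecidableEq ι]
    [NormedAddCommGroup E] [InnerProductSpace 𝕜 E] [FiniteDimensional 𝕜 E]
    {A : Matrix ι ι 𝕜} (hA : A.IsHermitian) {T : E →ₗ[𝕜] E} (hT : T.IsSymmetric) {n : ℕ}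
    (hn : finrank 𝕜 E = n) (h : T.charpoly = A.charpoly) :
    Finset.univ.val.map (hT.eigenvalues hn) = Finset.univ.val.map hA.eigenvalues := by
  refine Multiset.map_injective (RCLike.ofReal_injective (K := 𝕜)) ?_
  rw [Multiset.map_map, Multiset.map_map, ← hA.roots_charpoly_eq_eigenvalues,
    ← hT.roots_charpoly_eq_eigenvalues, h]

theorem Matrix.charpoly_adjoint_comp_self_toEuclideanLin {𝕜 m n : Type*} [RCLike 𝕜] [Fintype m]
    [Fintype n] [DecidableEq m] [DecidableEq n] (A : Matrix m n 𝕜) :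
    (LinearMap.adjoint (toEuclideanLin A) ∘ₗ toEuclideanLin A).charpoly = (Aᴴ * A).charpoly := by
  rw [← toEuclideanLin_conjTranspose_eq_adjoint, toEuclideanLin_eq_toLin_orthonormal,
    toEuclideanLin_eq_toLin_orthonormal, ← toLin_mul, charpoly_toLin]

theorem singVal_eq_singularValues {m n : ℕ} (M : Matrix (Fin m) (Fin n) ℂ) (i : ℕ) :
    singVal M i = (toEuclideanLin M).singularValues i := by
  have hT := (toEuclideanLin M).isSymmetric_adjoint_comp_self
  have hn := finrank_euclideanSpace_fin (𝕜 := ℂ) (n := n)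
  rw [singVal, Multiset.reverse_sort_eq_ofFn (hT.eigenvalues_antitone hn)
    (M.isHermitian_conjTranspose_mul_self.map_eigenvalues_eq hT hn
      M.charpoly_adjoint_comp_self_toEuclideanLin)]
  rcases lt_or_ge i n with hi | hi
  · rw [LinearMap.singularValues_of_lt _ hn hi, List.getD_eq_getElem _ _ (by simpa),
      List.getElem_ofFn]
  · rw [LinearMap.singularValues_of_finrank_le _ (hn.trans_le hi),
      List.getD_eq_default _ _ (by simpa), Real.sqrt_zero]

theorem weyl_inequality_general {m n : ℕ} (M N : Matrix (Fin m) (Fin n) ℂ) (i : ℕ) :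
    |singVal M i - singVal N i| ≤ specNorm (M - N) := by
  rw [singVal_eq_singularValues, singVal_eq_singularValues,
    specNorm_eq_norm_toContinuousLinearMap, map_sub]
  exact LinearMap.abs_sub_singularValues_le _ _ i

/-- Weyl's inequality for singular values. -/
theorem weyl_inequality {m n : ℕ} (M N : Matrix (Fin m) (Fin n) ℂ) (i : ℕ)
    (hi : i < min m n) :
    |singVal M i - singVal N i| ≤ specNorm (M - N) :=
  weyl_inequality_general M N i
end

section
/- Let S ∈ ℂ^{r×n} and define P = Φ_{inv}(S) Φ_f(S*) Φ_{inv}(S) Φ_{inv}(S*) for a function f : ℝ_{≥0} → ℝ_{≥0} with f(0) = 0. Then S* P S = Φ_h(S*S), where h : ℝ_{≥0} → ℝ_{≥0} is defined by h(0) = 0 and h(x) = f(√x)/√x for x > 0. -/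
/-! Every factor is diagonal with respect to the orthonormal systems `u`, `v`, so in the
product the coefficients simply multiply: `σ · (σ⁻¹ f(σ) σ⁻¹ σ⁻¹) · σ = f(σ)/σ = h(σ²)`. -/

open Matrix

section DyadicSums

variable {ι l m n R : Type*} [CommSemiring R] [Fintype ι] [DecidableEq ι] [Fintype m]

theorem sum_smul_vecMulVec_mul_sum_smul_vecMulVec (a : ι → l → R) (b c : ι → m → R)
    (e : ι → n → R) (hbc : ∀ i j, b i ⬝ᵥ c j = if i = j then 1 else 0) (x y : ι → R) :
    (∑ i, x i • vecMulVec (a i) (b i)) * (∑ j, y j • vecMulVec (c j) (e j)) =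
      ∑ i, (x i * y i) • vecMulVec (a i) (e i) := by
  have hterm : ∀ i j, (x i • vecMulVec (a i) (b i)) * (y j • vecMulVec (c j) (e j)) =
      if i = j then (x i * y i) • vecMulVec (a i) (e i) else 0 := by
    intro i j
    rw [Matrix.smul_mul, Matrix.mul_smul, vecMulVec_mul_vecMulVec, vecMulVec_smul, hbc]
    split_ifs with hij
    · subst hij
      rw [one_smul, smul_smul, mul_comm]
    · rw [zero_smul, smul_zero, smul_zero]
  simp only [Matrix.sum_mul, Matrix.mul_sum, hterm, Finset.sum_ite_eq', Finset.mem_univ, if_true]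

end DyadicSums

theorem core_identity_general {r n k : ℕ}
    (σ : Fin k → ℝ) (u : Fin k → Fin r → ℂ) (v : Fin k → Fin n → ℂ)
    (hu : ∀ i j, star (u i) ⬝ᵥ u j = if i = j then 1 else 0)
    (hv : ∀ i j, star (v i) ⬝ᵥ v j = if i = j then 1 else 0)
    (hσ : ∀ i, 0 < σ i)
    (S : Matrix (Fin r) (Fin n) ℂ)
    (hS : S = ∑ i, ((σ i : ℝ) : ℂ) • vecMulVec (u i) (star (v i)))
    (f h : ℝ → ℝ)
    (hh : ∀ x > 0, h x = f (Real.sqrt x) / Real.sqrt x) :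
    Sᴴ *
      ((∑ i, (((σ i)⁻¹ : ℝ) : ℂ) • vecMulVec (u i) (star (v i))) *
        (∑ i, ((f (σ i) : ℝ) : ℂ) • vecMulVec (v i) (star (u i))) *
        (∑ i, (((σ i)⁻¹ : ℝ) : ℂ) • vecMulVec (u i) (star (v i))) *
        (∑ i, (((σ i)⁻¹ : ℝ) : ℂ) • vecMulVec (v i) (star (u i)))) *
      S =
    ∑ i, ((h ((σ i) ^ 2) : ℝ) : ℂ) • vecMulVec (v i) (star (v i)) := by
  have hSH : Sᴴ = ∑ i, ((σ i : ℝ) : ℂ) • vecMulVec (v i) (star (u i)) := by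
    simp [hS, conjTranspose_sum, conjTranspose_smul]
  rw [hSH, hS]
  simp only [sum_smul_vecMulVec_mul_sum_smul_vecMulVec _ _ _ _ hu,
    sum_smul_vecMulVec_mul_sum_smul_vecMulVec _ _ _ _ hv]
  refine Finset.sum_congr rfl fun i _ => ?_
  congr 1
  have hσi : (σ i : ℂ) ≠ 0 := by exact_mod_cast (hσ i).ne'
  rw [hh _ (by positivity [hσ i]), Real.sqrt_sq (hσ i).le]
  push_cast
  field_simp

/-- Let `S = Σᵢ σᵢ uᵢ vᵢ*` be a (compact) SVD with positive singular values, and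
`P = Φ_inv(S) Φ_f(S*) Φ_inv(S) Φ_inv(S*)`. Then `S* P S = Φ_h(S*S)` where
`h(x) = f(√x)/√x` for `x > 0` and `h(0) = 0`; here
`Φ_h(S*S) = Σᵢ h(σᵢ²) vᵢ vᵢ*` applies `h` to the eigenvalues of `S*S`. -/
theorem core_identity {r n k : ℕ}
    (σ : Fin k → ℝ) (u : Fin k → Fin r → ℂ) (v : Fin k → Fin n → ℂ)
    (hu : ∀ i j, star (u i) ⬝ᵥ u j = if i = j then 1 else 0)
    (hv : ∀ i j, star (v i) ⬝ᵥ v j = if i = j then 1 else 0)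
    (hσ : ∀ i, 0 < σ i)
    (S : Matrix (Fin r) (Fin n) ℂ)
    (hS : S = ∑ i, ((σ i : ℝ) : ℂ) • vecMulVec (u i) (star (v i)))
    (f h : ℝ → ℝ) (hf0 : f 0 = 0) (hfnn : ∀ x, 0 ≤ x → 0 ≤ f x)
    (hh0 : h 0 = 0) (hh : ∀ x > 0, h x = f (Real.sqrt x) / Real.sqrt x) :
    Sᴴ *
      ((∑ i, (((σ i)⁻¹ : ℝ) : ℂ) • vecMulVec (u i) (star (v i))) *
        (∑ i, ((f (σ i) : ℝ) : ℂ) • vecMulVec (v i) (star (u i))) *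
        (∑ i, (((σ i)⁻¹ : ℝ) : ℂ) • vecMulVec (u i) (star (v i))) *
        (∑ i, (((σ i)⁻¹ : ℝ) : ℂ) • vecMulVec (v i) (star (u i)))) *
      S =
    ∑ i, ((h ((σ i) ^ 2) : ℝ) : ℂ) • vecMulVec (v i) (star (v i)) :=
  core_identity_general σ u v hu hv hσ S hS f h hh
end
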